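/- For the d-dimensional grid G = P □ ⋯ □ P (d factors), where P is a path with at least 3 vertices, χ(G²) ≤ 2d + 1; equivalently, G² has a proper colouring using colours {0,1,…,2d} given by c(v₁,…,v_d) ≡ Σ_{i=1}^d i·v_i (mod 2d+1), where vertices of P are identified with integers along the path. -/

import Mathlib

/-- The square of a graph: two distinct vertices are adjacent if they are
adjacent in `G` or have a common neighbour in `G`. -/
def SimpleGraph.square' {V : Type*} (G : SimpleGraph V) : SimpleGraph V where
  Adj u v := u ≠ v ∧ (G.Adj u v ∨ ∃ w, G.Adj u w ∧ G.Adj w v)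
  symm := ⟨fun u v => by
    rintro ⟨hne, h | ⟨w, h1, h2⟩⟩
    · exact ⟨hne.symm, Or.inl h.symm⟩
    · exact ⟨hne.symm, Or.inr ⟨w, h2.symm, h1.symm⟩⟩⟩
  loopless := ⟨fun u => by rintro ⟨hne, -⟩; exact hne rfl⟩

/-- The cartesian product of a family of graphs. -/
def boxProdPi {d : ℕ} {V : Fin d → Type*} (G : ∀ i, SimpleGraph (V i)) :
    SimpleGraph (∀ i, V i) where
  Adj u v := ∃ i, (G i).Adj (u i) (v i) ∧ ∀ j, j ≠ i → u j = v j
  symm := ⟨fun u v => by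
    rintro ⟨i, h, hj⟩
    exact ⟨i, h.symm, fun j hji => (hj j hji).symm⟩⟩
  loopless := ⟨fun u => by rintro ⟨i, h, -⟩; exact (G i).ne_of_adj h rfl⟩


/-! The colour of `x` is its weight `∑ (i + 1) x_i` modulo `2d + 1`. A step along coordinate `i`
changes the weight by `±(i + 1)`, so two vertices at distance one or two have weights differing by
`±a` or `±a ± b` with `1 ≤ a, b ≤ d`. Such a difference is nonzero (for `a = b` the opposite signs
would undo each other and give `x = y`) and at most `2d` in absolute value, hence not divisible
by `2d + 1`. -/

namespace Grid

variable {d n : ℕ}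

abbrev graph (d n : ℕ) : SimpleGraph (Fin d → Fin n) :=
  boxProdPi fun _ : Fin d => SimpleGraph.pathGraph n

def weight (x : Fin d → Fin n) : ℕ := ∑ i : Fin d, ((i : ℕ) + 1) * (x i : ℕ)

lemma weight_sub_weight_of_eq_off {x y : Fin d → Fin n} {i : Fin d}
    (h : ∀ j, j ≠ i → x j = y j) :
    (weight y : ℤ) - weight x = ((i : ℤ) + 1) * ((y i : ℤ) - x i) := by
  simp only [weight, Nat.cast_sum, Nat.cast_mul, Nat.cast_add, Nat.cast_one,
    ← Finset.sum_sub_distrib, ← mul_sub]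
  exact Finset.sum_eq_single i (fun j _ hj => by rw [h j hj, sub_self, mul_zero]) (by simp)

lemma exists_weight_sub_weight_of_adj {x y : Fin d → Fin n} (h : (graph d n).Adj x y) :
    ∃ i : Fin d, ∃ ε : ℤ, (ε = 1 ∨ ε = -1) ∧ (∀ j, j ≠ i → x j = y j) ∧
      (y i : ℤ) = x i + ε ∧ (weight y : ℤ) - weight x = ε * ((i : ℤ) + 1) := by
  obtain ⟨i, hi, hoff⟩ := h
  have hstep : (y i : ℤ) = x i + 1 ∨ (y i : ℤ) = x i + -1 := by
    rcases SimpleGraph.pathGraph_adj.mp hi with h | h <;> omega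
  have hweight := weight_sub_weight_of_eq_off hoff
  rcases hstep with hstep | hstep
  · exact ⟨i, 1, .inl rfl, hoff, hstep, by rw [hweight, hstep]; ring⟩
  · exact ⟨i, -1, .inr rfl, hoff, hstep, by rw [hweight, hstep]; ring⟩

lemma weight_sub_weight_ne_zero_and_abs_le_of_adj {x y : Fin d → Fin n}
    (h : (graph d n).square'.Adj x y) :
    (weight y : ℤ) - weight x ≠ 0 ∧ |(weight y : ℤ) - weight x| ≤ 2 * d := by
  have hidx (i : Fin d) : (i : ℤ) + 1 ≤ d := by have := i.isLt; omega
  obtain ⟨hne, hxy | ⟨w, hxw, hwy⟩⟩ := h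
  · obtain ⟨i, ε, hε, -, -, hdiff⟩ := exists_weight_sub_weight_of_adj hxy
    have := hidx i
    rw [abs_le]
    rcases hε with rfl | rfl <;> omega
  · obtain ⟨i, ε, hε, hxwi, hi, hdiffi⟩ := exists_weight_sub_weight_of_adj hxw
    obtain ⟨k, δ, hδ, hwyk, hk, hdiffk⟩ := exists_weight_sub_weight_of_adj hwy
    have := hidx i
    have := hidx k
    rw [abs_le, show (weight y : ℤ) - weight x = ε * ((i : ℤ) + 1) + δ * ((k : ℤ) + 1) by
      linarith]
    by_cases hik : i = k
    · subst hik
      have hεδ : ε + δ ≠ 0 := fun hεδ => hne <| funext fun j => by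
        by_cases hj : j = i
        · subst hj; omega
        · rw [hxwi j hj, hwyk j hj]
      rcases hε with rfl | rfl <;> rcases hδ with rfl | rfl <;> omega
    · have : (i : ℤ) ≠ k := fun h => hik (Fin.ext (by exact_mod_cast h))
      rcases hε with rfl | rfl <;> rcases hδ with rfl | rfl <;> omega

lemma weight_mod_ne_of_adj {x y : Fin d → Fin n} (h : (graph d n).square'.Adj x y) :
    weight x % (2 * d + 1) ≠ weight y % (2 * d + 1) := by
  obtain ⟨hne, hle⟩ := weight_sub_weight_ne_zero_and_abs_le_of_adj h
  intro hmod
  have := Nat.ModEq.eq_of_abs_lt hmod (by push_cast; omega)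
  omega

lemma square_colorable (d n : ℕ) : (graph d n).square'.Colorable (2 * d + 1) :=
  ⟨.mk (fun x => ⟨weight x % (2 * d + 1), Nat.mod_lt _ (by omega)⟩)
    fun h hc => weight_mod_ne_of_adj h (congrArg Fin.val hc)⟩

end Grid

theorem grid_square_colouring_general {d n : ℕ} :
    (boxProdPi (fun _ : Fin d => SimpleGraph.pathGraph n)).square'.chromaticNumber
        ≤ ((2 * d + 1 : ℕ) : ℕ∞) ∧
      ∀ x y : Fin d → Fin n,
        (boxProdPi (fun _ : Fin d => SimpleGraph.pathGraph n)).square'.Adj x y →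
          (∑ i : Fin d, ((i : ℕ) + 1) * (x i : ℕ)) % (2 * d + 1) ≠
          (∑ i : Fin d, ((i : ℕ) + 1) * (y i : ℕ)) % (2 * d + 1) :=
  ⟨(Grid.square_colorable d n).chromaticNumber_le,
    fun _ _ => Grid.weight_mod_ne_of_adj⟩

theorem grid_square_colouring {d n : ℕ} (hn : 3 ≤ n) :
    (boxProdPi (fun _ : Fin d => SimpleGraph.pathGraph n)).square'.chromaticNumber
        ≤ ((2 * d + 1 : ℕ) : ℕ∞) ∧
      ∀ x y : Fin d → Fin n,
        (boxProdPi (fun _ : Fin d => SimpleGraph.pathGraph n)).square'.Adj x y →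
          (∑ i : Fin d, ((i : ℕ) + 1) * (x i : ℕ)) % (2 * d + 1) ≠
          (∑ i : Fin d, ((i : ℕ) + 1) * (y i : ℕ)) % (2 * d + 1) :=
  grid_square_colouring_general
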